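/- A surjective localizing immersion of noetherian schemes is an isomorphism. More generally, if f : X → Y is a localizing immersion of noetherian schemes whose image f(X) is a closed subset of Y, then f is an isomorphism of X onto an open and closed subscheme of Y (a union of connected components of Y). -/

import Mathlib

/-! Formalization of a statement from "Compactification for essentially finite-type maps"
(S. Nayak). All schemes are noetherian where stated. -/

open AlgebraicGeometry CategoryTheory CategoryTheory.Limits TopologicalSpace Opposite

universe u

/-- A ring homomorphism `φ : A →+* B` is a localization homomorphism if it realizes `B` as a
localization of `A` at some multiplicative subset, with `φ` as the canonical map. -/
def IsLocalizationHom {A B : Type u} [CommRing A] [CommRing B] (φ : A →+* B) : Prop :=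
  ∃ M : Submonoid A, @IsLocalization A _ M B _ φ.toAlgebra

/-- A ring homomorphism `φ : A →+* B` is essentially of finite type if it realizes `B` as a
localization of a finitely generated `A`-algebra. -/
def IsEssFiniteTypeHom {A B : Type u} [CommRing A] [CommRing B] (φ : A →+* B) : Prop :=
  @Algebra.EssFiniteType A B _ _ φ.toAlgebra

/-- A morphism of schemes is localizing if every point `y` of the target has an affine open
neighborhood `V = Spec A` such that `f ⁻¹ V` is covered by finitely many affine opens
`Uᵢ = Spec Bᵢ` for which the induced ring homomorphisms `A →+* Bᵢ` are localization
homomorphisms. -/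
def IsLocalizingMorphism {X Y : Scheme.{u}} (f : X ⟶ Y) : Prop :=
  ∀ y : Y, ∃ V : Y.affineOpens, y ∈ V.1 ∧
    ∃ 𝒰 : Finset X.affineOpens,
      (∀ x : X, f.base x ∈ V.1 → ∃ U ∈ 𝒰, x ∈ U.1) ∧
      ∀ U ∈ 𝒰, ∃ hle : U.1 ≤ f ⁻¹ᵁ V.1, IsLocalizationHom (f.appLE V.1 U.1 hle).hom

/-- A localizing immersion is a localizing morphism that is set-theoretically injective. -/
def IsLocalizingImmersion {X Y : Scheme.{u}} (f : X ⟶ Y) : Prop :=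
  IsLocalizingMorphism f ∧ Function.Injective f.base

/-- A morphism of schemes is essentially of finite type if every point `y` of the target has an
affine open neighborhood `V = Spec A` such that `f ⁻¹ V` is covered by finitely many affine
opens `Uᵢ = Spec Bᵢ` for which the induced ring homomorphisms `A →+* Bᵢ` are essentially of
finite type. -/
def IsEssentiallyFiniteType {X Y : Scheme.{u}} (f : X ⟶ Y) : Prop :=
  ∀ y : Y, ∃ V : Y.affineOpens, y ∈ V.1 ∧
    ∃ 𝒰 : Finset X.affineOpens,
      (∀ x : X, f.base x ∈ V.1 → ∃ U ∈ 𝒰, x ∈ U.1) ∧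
      ∀ U ∈ 𝒰, ∃ hle : U.1 ≤ f ⁻¹ᵁ V.1, IsEssFiniteTypeHom (f.appLE V.1 U.1 hle).hom

/-! On an affine chart `Spec S⁻¹A → Spec A` a localizing morphism is a topological embedding
whose image is stable under generalization, and its stalk maps are isomorphisms. Hence, for
closed `Z ⊆ X`, `f(Z)` is a finite union of sets `C ∩ T` with `C` closed and `T` stable under
generalization, and such a set contains the generic point of every irreducible closed set in which
it is dense. By noetherian induction, a subset of a noetherian sober space with this property that
is also stable under specialization is closed. When `f(X)` is closed, injectivity of `f` makes
every `f(Z)` stable under specialization, so `f` is a closed embedding; its image, being closed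
and stable under generalization, is also open, and the stalk isomorphisms make `f` an open
immersion. -/

open Topology

section GenericPoints

variable {Y : Type*} [TopologicalSpace Y]

def ContainsGenericPoints (S : Set Y) : Prop :=
  ∀ η : Y, η ∈ closure (S ∩ closure {η}) → η ∈ S

lemma IsClosed.containsGenericPoints {S : Set Y} (hS : IsClosed S) : ContainsGenericPoints S :=
  fun _ hη ↦ closure_minimal Set.inter_subset_left hS hη

lemma StableUnderGeneralization.containsGenericPoints {S : Set Y}
    (hS : StableUnderGeneralization S) : ContainsGenericPoints S := by
  intro η hη
  obtain ⟨ξ, hξS, hηξ⟩ := closure_nonempty_iff.mp ⟨η, hη⟩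
  exact hS (specializes_iff_mem_closure.mpr hηξ) hξS

lemma ContainsGenericPoints.inter {S T : Set Y} (hS : ContainsGenericPoints S)
    (hT : ContainsGenericPoints T) : ContainsGenericPoints (S ∩ T) := fun η hη ↦
  ⟨hS η (closure_mono (by gcongr; exact Set.inter_subset_left) hη),
    hT η (closure_mono (by gcongr; exact Set.inter_subset_right) hη)⟩

lemma ContainsGenericPoints.biUnion {ι : Type*} {s : Finset ι} {S : ι → Set Y}
    (hS : ∀ i ∈ s, ContainsGenericPoints (S i)) : ContainsGenericPoints (⋃ i ∈ s, S i) := by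
  intro η hη
  rw [Set.iUnion₂_inter, Finset.closure_biUnion, Set.mem_iUnion₂] at hη
  obtain ⟨i, hi, hηi⟩ := hη
  exact Set.mem_biUnion hi (hS i hi η hηi)

lemma isClosed_of_stableUnderSpecialization_of_containsGenericPoints [NoetherianSpace Y]
    [QuasiSober Y] {S : Set Y} (hspec : StableUnderSpecialization S)
    (hgen : ContainsGenericPoints S) : IsClosed S := by
  suffices ∀ K : Closeds Y, IsClosed (S ∩ K) by simpa using this ⊤
  intro K
  induction K using WellFoundedLT.induction with | _ K ih
  by_cases hirr : IsIrreducible (K : Set Y)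
  · obtain ⟨η, hη⟩ := QuasiSober.sober hirr K.2
    have hK : (K : Set Y) = closure {η} := hη.def.symm
    by_cases hηS : η ∈ S
    · have hKS : (K : Set Y) ⊆ S := fun x hx ↦
        hspec (specializes_iff_mem_closure.mpr (hK ▸ hx)) hηS
      rw [Set.inter_eq_right.mpr hKS]
      exact K.2
    · let K' : Closeds Y := ⟨closure (S ∩ K), isClosed_closure⟩
      have hK'K : K' < K := by
        refine lt_of_le_of_ne (closure_minimal Set.inter_subset_right K.2) fun h ↦ hηS ?_
        have hηK' : η ∈ (K' : Set Y) := by rw [h]; exact hη.mem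
        exact hgen η (hK ▸ hηK')
      have hSK : S ∩ K = S ∩ K' :=
        subset_antisymm (fun x hx ↦ ⟨hx.1, subset_closure hx⟩)
          (Set.inter_subset_inter_right _ (closure_minimal Set.inter_subset_right K.2))
      rw [hSK]
      exact ih K' hK'K
  · rcases (K : Set Y).eq_empty_or_nonempty with hempty | hne
    · simp [hempty]
    have hred : ¬ IsPreirreducible (K : Set Y) := fun h ↦ hirr ⟨hne, h⟩
    simp only [isPreirreducible_iff_isClosed_union_isClosed, not_forall, not_or] at hred
    obtain ⟨A, B, hA, hB, hKAB, hKA, hKB⟩ := hred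
    have hsplit : S ∩ K = S ∩ ↑(K ⊓ ⟨A, hA⟩) ∪ S ∩ ↑(K ⊓ ⟨B, hB⟩) := by
      ext x
      have := @hKAB x
      simp only [Closeds.coe_inf, Closeds.coe_mk, Set.mem_union, Set.mem_inter_iff] at this ⊢
      tauto
    rw [hsplit]
    exact (ih _ (inf_lt_left.mpr hKA)).union (ih _ (inf_lt_left.mpr hKB))

lemma isOpen_of_isClosed_of_stableUnderGeneralization [NoetherianSpace Y] [QuasiSober Y]
    {S : Set Y} (hc : IsClosed S) (hg : StableUnderGeneralization S) : IsOpen S :=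
  isClosed_compl_iff.mp <| isClosed_of_stableUnderSpecialization_of_containsGenericPoints
    hg.compl hc.isOpen_compl.stableUnderGeneralization.containsGenericPoints

end GenericPoints

lemma isIso_stalkMap_Spec_map_of_isLocalizationHom {R S : CommRingCat.{u}} {φ : R ⟶ S}
    (hφ : IsLocalizationHom φ.hom) (p : Spec S) : IsIso ((Spec.map φ).stalkMap p) := by
  obtain ⟨M, hM⟩ := hφ
  let := φ.hom.toAlgebra
  let e : Localization M ≃ₐ[R] S := IsLocalization.algEquiv M _ _
  have hφe : φ = CommRingCat.ofHom (algebraMap R (Localization M)) ≫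
      e.toRingEquiv.toCommRingCatIso.hom := by
    ext x
    exact (e.commutes x).symm
  rw [hφe, Spec.map_comp, Scheme.Hom.stalkMap_comp]
  exact IsIso.comp_isIso' (isIso_SpecMap_stakMap_localization R M _) inferInstance

section Charts

variable {X Y : Scheme.{u}} (f : X ⟶ Y)

def IsLocalizingChart (U : X.affineOpens) : Prop :=
  ∃ (V : Y.affineOpens) (hle : U.1 ≤ f ⁻¹ᵁ V.1), IsLocalizationHom (f.appLE V.1 U.1 hle).hom

lemma image_affineOpen_eq_range_fromSpec_comp (U : X.affineOpens) :
    f.base '' U.1 = Set.range (U.2.fromSpec ≫ f).base := by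
  rw [← U.2.range_fromSpec, ← Set.range_comp]
  rfl

variable {f} {U : X.affineOpens}

lemma IsLocalizingChart.isEmbedding (hU : IsLocalizingChart f U) :
    IsEmbedding (U.2.fromSpec ≫ f).base := by
  obtain ⟨V, hle, M, hM⟩ := hU
  let := (f.appLE V.1 U.1 hle).hom.toAlgebra
  have := V.2.isOpenImmersion_fromSpec
  rw [← IsAffineOpen.SpecMap_appLE_fromSpec f V.2 U.2 hle, Scheme.Hom.comp_base]
  exact V.2.fromSpec.isOpenEmbedding.isEmbedding.comp
    (PrimeSpectrum.localization_comap_isEmbedding (R := Γ(Y, V.1)) Γ(X, U.1) M)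

lemma IsLocalizingChart.generalizingMap (hU : IsLocalizingChart f U) :
    GeneralizingMap (U.2.fromSpec ≫ f).base := by
  obtain ⟨V, hle, M, hM⟩ := hU
  let := (f.appLE V.1 U.1 hle).hom.toAlgebra
  have := V.2.isOpenImmersion_fromSpec
  have : Module.Flat Γ(Y, V.1) Γ(X, U.1) := IsLocalization.flat _ M
  have hfac : ⇑(U.2.fromSpec ≫ f).base =
      V.2.fromSpec.base ∘ (Spec.map (f.appLE V.1 U.1 hle)).base := by
    rw [← IsAffineOpen.SpecMap_appLE_fromSpec f V.2 U.2 hle]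
    rfl
  rw [hfac]
  exact (RingHom.Flat.generalizingMap_comap this).comp
    V.2.fromSpec.isOpenEmbedding.generalizingMap

lemma IsLocalizingChart.isIso_stalkMap (hU : IsLocalizingChart f U) {x : X} (hx : x ∈ U.1) :
    IsIso (f.stalkMap x) := by
  obtain ⟨V, hle, hφ⟩ := hU
  have := U.2.isOpenImmersion_fromSpec
  have := V.2.isOpenImmersion_fromSpec
  obtain ⟨q, rfl⟩ : x ∈ Set.range U.2.fromSpec.base := U.2.range_fromSpec ▸ hx
  have hSpec : IsIso ((Spec.map (f.appLE V.1 U.1 hle) ≫ V.2.fromSpec).stalkMap q) := by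
    rw [Scheme.Hom.stalkMap_comp]
    have hV : ∀ y, IsIso (V.2.fromSpec.stalkMap y) := fun _ ↦ inferInstance
    exact IsIso.comp_isIso' (hV _) (isIso_stalkMap_Spec_map_of_isLocalizationHom hφ q)
  have hcomp : IsIso ((U.2.fromSpec ≫ f).stalkMap q) := by
    rw [Scheme.Hom.stalkMap_congr_hom _ _
      (IsAffineOpen.SpecMap_appLE_fromSpec f V.2 U.2 hle).symm]
    infer_instance
  rw [Scheme.Hom.stalkMap_comp] at hcomp
  have hUq : IsIso (U.2.fromSpec.stalkMap q) := inferInstance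
  exact @IsIso.of_isIso_comp_right _ _ _ _ _ _ _ hUq hcomp

lemma IsLocalizingChart.stableUnderGeneralization_image (hU : IsLocalizingChart f U) :
    StableUnderGeneralization (f.base '' U.1) :=
  image_affineOpen_eq_range_fromSpec_comp f U ▸ hU.generalizingMap.stableUnderGeneralization_range

lemma IsLocalizingChart.containsGenericPoints_image_inter (hU : IsLocalizingChart f U)
    {Z : Set X} (hZ : IsClosed Z) : ContainsGenericPoints (f.base '' (Z ∩ U.1)) := by
  obtain ⟨C, hC, hCZ⟩ := hU.isEmbedding.isInducing.isClosed_iff.mp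
    (hZ.preimage U.2.fromSpec.base.hom.continuous)
  have hcap : f.base '' (Z ∩ U.1) = C ∩ f.base '' U.1 := by
    rw [image_affineOpen_eq_range_fromSpec_comp, ← Set.image_preimage_eq_inter_range, hCZ,
      ← U.2.range_fromSpec, ← Set.image_preimage_eq_inter_range, Set.image_image]
    rfl
  rw [hcap]
  exact hC.containsGenericPoints.inter hU.stableUnderGeneralization_image.containsGenericPoints

lemma IsLocalizingChart.specializes_of_specializes (hU : IsLocalizingChart f U) {x x' : X}
    (hx : x ∈ U.1) (hx' : x' ∈ U.1) (h : f.base x ⤳ f.base x') : x ⤳ x' := by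
  obtain ⟨a, rfl⟩ : x ∈ Set.range U.2.fromSpec.base := U.2.range_fromSpec ▸ hx
  obtain ⟨b, rfl⟩ : x' ∈ Set.range U.2.fromSpec.base := U.2.range_fromSpec ▸ hx'
  exact (hU.isEmbedding.isInducing.specializes_iff.mp h).map U.2.fromSpec.base.hom.continuous

lemma IsLocalizingMorphism.exists_isLocalizingChart (hf : IsLocalizingMorphism f) (x : X) :
    ∃ U, IsLocalizingChart f U ∧ x ∈ U.1 := by
  obtain ⟨V, hxV, 𝒰, hcov, hloc⟩ := hf (f.base x)
  obtain ⟨U, hU, hxU⟩ := hcov x hxV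
  obtain ⟨hle, hφ⟩ := hloc U hU
  exact ⟨U, ⟨V, hle, hφ⟩, hxU⟩

end Charts

section Immersions

variable {X Y : Scheme.{u}} {f : X ⟶ Y}

lemma IsLocalizingMorphism.exists_finset_isLocalizingChart [CompactSpace Y]
    (hf : IsLocalizingMorphism f) :
    ∃ s : Finset X.affineOpens, (∀ U ∈ s, IsLocalizingChart f U) ∧ ∀ x, ∃ U ∈ s, x ∈ U.1 := by
  classical
  choose V hyV 𝒰 hcov hloc using hf
  obtain ⟨t, ht⟩ := isCompact_univ.elim_finite_subcover (fun y ↦ ((V y).1 : Set Y))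
    (fun y ↦ (V y).1.2) fun y _ ↦ Set.mem_iUnion.2 ⟨y, hyV y⟩
  refine ⟨t.biUnion 𝒰, fun U hU ↦ ?_, fun x ↦ ?_⟩
  · obtain ⟨y, -, hU⟩ := Finset.mem_biUnion.mp hU
    obtain ⟨hle, hφ⟩ := hloc y U hU
    exact ⟨V y, hle, hφ⟩
  · obtain ⟨y, hy, hxy⟩ := Set.mem_iUnion₂.mp (ht (Set.mem_univ (f.base x)))
    obtain ⟨U, hU, hxU⟩ := hcov y x hxy
    exact ⟨U, Finset.mem_biUnion.mpr ⟨y, hy, hU⟩, hxU⟩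

lemma IsLocalizingMorphism.isIso_stalkMap (hf : IsLocalizingMorphism f) (x : X) :
    IsIso (f.stalkMap x) := by
  obtain ⟨U, hU, hxU⟩ := hf.exists_isLocalizingChart x
  exact hU.isIso_stalkMap hxU

lemma IsLocalizingMorphism.stableUnderGeneralization_range (hf : IsLocalizingMorphism f) :
    StableUnderGeneralization (Set.range f.base) := by
  rintro _ y hy ⟨x, rfl⟩
  obtain ⟨U, hU, hxU⟩ := hf.exists_isLocalizingChart x
  exact Set.image_subset_range _ _ (hU.stableUnderGeneralization_image hy ⟨x, hxU, rfl⟩)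

lemma IsLocalizingMorphism.containsGenericPoints_image [CompactSpace Y]
    (hf : IsLocalizingMorphism f) {Z : Set X} (hZ : IsClosed Z) :
    ContainsGenericPoints (f.base '' Z) := by
  obtain ⟨s, hs, hcov⟩ := hf.exists_finset_isLocalizingChart
  have hZs : f.base '' Z = ⋃ U ∈ s, f.base '' (Z ∩ U.1) := by
    refine subset_antisymm ?_ (Set.iUnion₂_subset fun U _ ↦ Set.image_mono Set.inter_subset_left)
    rintro _ ⟨x, hxZ, rfl⟩
    obtain ⟨U, hU, hxU⟩ := hcov x
    exact Set.mem_biUnion hU ⟨x, ⟨hxZ, hxU⟩, rfl⟩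
  rw [hZs]
  exact ContainsGenericPoints.biUnion fun U hU ↦ (hs U hU).containsGenericPoints_image_inter hZ

lemma IsLocalizingImmersion.stableUnderSpecialization_image (hf : IsLocalizingImmersion f)
    (hrange : IsClosed (Set.range f.base)) {Z : Set X} (hZ : IsClosed Z) :
    StableUnderSpecialization (f.base '' Z) := by
  rintro _ w hw ⟨x, hxZ, rfl⟩
  obtain ⟨x', rfl⟩ := hrange.stableUnderSpecialization hw (Set.mem_range_self x)
  obtain ⟨U, hU, hx'U⟩ := hf.1.exists_isLocalizingChart x'
  obtain ⟨x₀, hx₀U, hx₀⟩ := hU.stableUnderGeneralization_image hw ⟨x', hx'U, rfl⟩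
  obtain rfl := hf.2 hx₀
  exact ⟨x', (hU.specializes_of_specializes hx₀U hx'U hw).mem_closed hZ hxZ, rfl⟩

lemma IsLocalizingImmersion.isClosedMap [IsNoetherian Y] (hf : IsLocalizingImmersion f)
    (hrange : IsClosed (Set.range f.base)) : IsClosedMap f.base := fun _ hZ ↦
  isClosed_of_stableUnderSpecialization_of_containsGenericPoints
    (hf.stableUnderSpecialization_image hrange hZ) (hf.1.containsGenericPoints_image hZ)

lemma IsLocalizingImmersion.isOpenImmersion [IsNoetherian Y] (hf : IsLocalizingImmersion f)
    (hrange : IsClosed (Set.range f.base)) : IsOpenImmersion f := by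
  have hemb : IsClosedEmbedding f.base := .of_continuous_injective_isClosedMap
    f.base.hom.continuous hf.2 (hf.isClosedMap hrange)
  have hopen : IsOpen (Set.range f.base) :=
    isOpen_of_isClosed_of_stableUnderGeneralization hrange hf.1.stableUnderGeneralization_range
  have := hf.1.isIso_stalkMap
  exact .of_isIso_stalkMap f ⟨hemb.isEmbedding, hopen⟩

end Immersions

theorem isLocalizingImmersion_isIso_or_clopen_general
    {X Y : Scheme.{u}} [IsNoetherian Y] (f : X ⟶ Y)
    (hf : IsLocalizingImmersion f) :
    (Function.Surjective f.base → IsIso f) ∧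
    (IsClosed (Set.range f.base) → IsOpenImmersion f ∧ IsClosedImmersion f) := by
  refine ⟨fun hsurj ↦ ?_, fun hrange ↦ ?_⟩
  · have := hf.isOpenImmersion (Set.range_eq_univ.mpr hsurj ▸ isClosed_univ)
    have : Epi f.base := (TopCat.epi_iff_surjective f.base).mpr hsurj
    exact IsOpenImmersion.isIso f
  · have := hf.isOpenImmersion hrange
    exact ⟨this, .of_isPreimmersion f hrange⟩

/-- A surjective localizing immersion of noetherian schemes is an isomorphism; more generally,
a localizing immersion with closed image is an isomorphism onto an open and closed subscheme
(a union of connected components), i.e. it is both an open immersion and a closed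
immersion. -/
theorem isLocalizingImmersion_isIso_or_clopen
    {X Y : Scheme.{u}} [IsNoetherian X] [IsNoetherian Y] (f : X ⟶ Y)
    (hf : IsLocalizingImmersion f) :
    (Function.Surjective f.base → IsIso f) ∧
    (IsClosed (Set.range f.base) → IsOpenImmersion f ∧ IsClosedImmersion f) :=
  isLocalizingImmersion_isIso_or_clopen_general f hf
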